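/- arXiv:2512.02866 — 3 statements merged into one kernel-verified Lean document; each statement's English description precedes it below -/
import Mathlib

section
/- Let V, W have full column rank with [V W] of full column rank, let λ > 0 be the smallest singular value of [V W], and let δ = ‖(VᵀV)^{−1/2}VᵀW(WᵀW)^{−1/2}‖ (operator norm), so δ < 1. Let Γ be the Gram matrix of [V W]. Then the operator norm of the (1,2) block of Γ⁻¹ satisfies ‖[Γ⁻¹]₁₂‖ ≤ λ⁻² δ (1 − δ²)⁻¹. -/
open Matrix

/-- The ℓ²→ℓ² operator norm of a real matrix. -/
noncomputable def opNorm {m n : Type*} [Fintype m] [Fintype n] [DecidableEq n]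
    (A : Matrix m n ℝ) : ℝ :=
  ‖LinearMap.toContinuousLinearMap (Matrix.toEuclideanLin A)‖

/-- `(AᵀA)^{-1/2}`: the inverse of the positive semidefinite square root of the Gram
matrix of `A`. -/
noncomputable def invSqrtGram {n r : ℕ} (A : Matrix (Fin n) (Fin r) ℝ) :
    Matrix (Fin r) (Fin r) ℝ :=
  (((Matrix.posSemidef_conjTranspose_mul_self A).1.eigenvectorUnitary : Matrix (Fin r) (Fin r) ℝ) *
    Matrix.diagonal (Real.sqrt ∘ (Matrix.posSemidef_conjTranspose_mul_self A).1.eigenvalues) *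
    (star (Matrix.posSemidef_conjTranspose_mul_self A).1.eigenvectorUnitary : Matrix (Fin r) (Fin r) ℝ))⁻¹

open scoped Matrix.Norms.L2Operator

set_option linter.unusedSectionVars false
set_option linter.unusedVariables false
set_option maxHeartbeats 1000000

noncomputable def Matrix.PosSemidef.sqrt {k : Type*} [Fintype k] [DecidableEq k] {M : Matrix k k ℝ}
    (hM : M.PosSemidef) : Matrix k k ℝ :=
  (hM.1.eigenvectorUnitary : Matrix k k ℝ) * Matrix.diagonal (Real.sqrt ∘ hM.1.eigenvalues) *
    (star hM.1.eigenvectorUnitary : Matrix k k ℝ)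

lemma herm_spec_eq {k : Type*} [Fintype k] [DecidableEq k] {M : Matrix k k ℝ} (hM : M.IsHermitian) :
    M = (hM.eigenvectorUnitary : Matrix k k ℝ) * diagonal (RCLike.ofReal ∘ hM.eigenvalues) *
      star (hM.eigenvectorUnitary : Matrix k k ℝ) := by
  have h := hM.spectral_theorem
  rw [Unitary.conjStarAlgAut_apply] at h
  exact h

lemma Matrix.PosSemidef.sqrt_eq' {k : Type*} [Fintype k] [DecidableEq k] {M : Matrix k k ℝ}
    (hM : M.PosSemidef) {U : Matrix k k ℝ} (hU : U = hM.1.eigenvectorUnitary) :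
    hM.sqrt = U * diagonal (Real.sqrt ∘ hM.1.eigenvalues) * star U := by
  subst hU; rfl

lemma Matrix.PosSemidef.posSemidef_sqrt {k : Type*} [Fintype k] [DecidableEq k] {M : Matrix k k ℝ}
    (hM : M.PosSemidef) : hM.sqrt.PosSemidef := by
  rw [hM.sqrt_eq' rfl]
  have h := (Matrix.PosSemidef.diagonal (d := Real.sqrt ∘ hM.1.eigenvalues)
    (Pi.le_def.mpr fun i => Real.sqrt_nonneg _)).mul_mul_conjTranspose_same
    (hM.1.eigenvectorUnitary : Matrix k k ℝ)
  rw [Matrix.star_eq_conjTranspose]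
  exact h

lemma Matrix.PosSemidef.sqrt_mul_self {k : Type*} [Fintype k] [DecidableEq k] {M : Matrix k k ℝ}
    (hM : M.PosSemidef) : hM.sqrt * hM.sqrt = M := by
  obtain ⟨U, hU⟩ : ∃ U : Matrix k k ℝ, U = hM.1.eigenvectorUnitary := ⟨_, rfl⟩
  have hs := herm_spec_eq hM.1
  rw [← hU] at hs
  have hUU : star U * U = 1 := by
    subst hU; exact (Matrix.mem_unitaryGroup_iff').mp hM.1.eigenvectorUnitary.2
  have hD : diagonal (Real.sqrt ∘ hM.1.eigenvalues) * diagonal (Real.sqrt ∘ hM.1.eigenvalues)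
      = diagonal (RCLike.ofReal ∘ hM.1.eigenvalues) := by
    rw [diagonal_mul_diagonal]; congr 1; funext i
    exact Real.mul_self_sqrt (hM.eigenvalues_nonneg i)
  rw [hM.sqrt_eq' hU]
  conv_rhs => rw [hs]
  simp only [Matrix.mul_assoc]
  rw [← Matrix.mul_assoc (star U) U, hUU, Matrix.one_mul,
    ← Matrix.mul_assoc (diagonal (Real.sqrt ∘ hM.1.eigenvalues)), hD]

namespace Aux

variable {k : Type*} [Fintype k] [DecidableEq k]

variable {k : Type*} [Fintype k] [DecidableEq k]

lemma star_triv (v : k → ℝ) : star v = v := by funext i; simp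

lemma herm_smul {M : Matrix k k ℝ} (hM : M.IsHermitian) (c : ℝ) : (c • M).IsHermitian := by
  rw [Matrix.IsHermitian, conjTranspose_smul, hM.eq]; simp

lemma psd_smul {M : Matrix k k ℝ} (hM : M.PosSemidef) {c : ℝ} (hc : 0 ≤ c) :
    (c • M).PosSemidef := by
  refine Matrix.PosSemidef.of_dotProduct_mulVec_nonneg (herm_smul hM.1 c) fun x => ?_
  rw [smul_mulVec, dotProduct_smul, smul_eq_mul]
  exact mul_nonneg hc (hM.dotProduct_mulVec_nonneg x)

lemma dot_self_nonneg (v : k → ℝ) : 0 ≤ v ⬝ᵥ v :=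
  Finset.sum_nonneg fun i _ => mul_self_nonneg _

lemma posdef_of_shift {M : Matrix k k ℝ} {c : ℝ} (hc : 0 < c)
    (h : (M - c • (1 : Matrix k k ℝ)).PosSemidef) : M.PosDef := by
  refine Matrix.PosDef.of_dotProduct_mulVec_pos ?_ ?_
  · have h1 : M = (M - c • 1) + c • 1 := by abel
    rw [h1]
    exact h.1.add (herm_smul Matrix.isHermitian_one c)
  · intro x hx
    have h2 := h.dotProduct_mulVec_nonneg x
    rw [star_triv] at h2 ⊢
    rw [sub_mulVec, smul_mulVec, one_mulVec, dotProduct_sub, dotProduct_smul,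
      smul_eq_mul, sub_nonneg] at h2
    have h3 : 0 < x ⬝ᵥ x :=
      lt_of_le_of_ne (dot_self_nonneg x) (fun h' => hx ((dotProduct_self_eq_zero).mp h'.symm))
    calc (0:ℝ) < c * (x ⬝ᵥ x) := by positivity
    _ ≤ x ⬝ᵥ M *ᵥ x := h2

lemma norm_euclid_sq (v : k → ℝ) : ‖(WithLp.equiv 2 (k → ℝ)).symm v‖ ^ 2 = v ⬝ᵥ v := by
  rw [EuclideanSpace.norm_eq, Real.sq_sqrt (by positivity)]
  simp [dotProduct, sq]

lemma transpose_eq {M : Matrix k k ℝ} (hM : M.IsHermitian) : Mᵀ = M := by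
  rw [← conjTranspose_eq_transpose_of_trivial]; exact hM

lemma dot_mulVec_symm {M : Matrix k k ℝ} (hM : M.IsHermitian) (v w : k → ℝ) :
    v ⬝ᵥ M *ᵥ w = (M *ᵥ v) ⬝ᵥ w := by
  rw [dotProduct_mulVec]
  nth_rewrite 1 [← transpose_eq hM]
  rw [vecMul_transpose]

lemma sqrt_conj_mid {M : Matrix k k ℝ} (hM : M.PosSemidef) :
    hM.sqrt * M * hM.sqrt = M * M := by
  obtain ⟨S, hS, hSM⟩ : ∃ S, S = hM.sqrt ∧ S * S = M := ⟨hM.sqrt, rfl, hM.sqrt_mul_self⟩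
  rw [← hS]
  nth_rewrite 1 [← hSM]
  rw [show S * (S * S) * S = (S * S) * (S * S) by noncomm_ring, hSM]

lemma opNorm_le_of_psd {M : Matrix k k ℝ} (hM : M.PosSemidef) {c : ℝ} (hc : 0 ≤ c)
    (h : (c • (1 : Matrix k k ℝ) - M).PosSemidef) : ‖M‖ ≤ c := by
  have hsq : (c ^ 2 • (1 : Matrix k k ℝ) - M * M).PosSemidef := by
    have e : c ^ 2 • (1 : Matrix k k ℝ) - M * M
        = c • (c • (1 : Matrix k k ℝ) - M) + hM.sqrt * (c • (1 : Matrix k k ℝ) - M) * hM.sqrtᴴ := by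
      rw [hM.posSemidef_sqrt.1]
      rw [Matrix.mul_sub, Matrix.sub_mul, Matrix.mul_smul, Matrix.smul_mul, Matrix.mul_one,
        hM.sqrt_mul_self, sqrt_conj_mid hM, smul_sub, smul_smul]
      rw [show c * c = c ^ 2 from (sq c).symm]
      abel
    rw [e]
    exact (psd_smul h hc).add (h.mul_mul_conjTranspose_same hM.sqrt)
  rw [Matrix.l2_opNorm_def]
  refine ContinuousLinearMap.opNorm_le_bound _ hc fun x => ?_
  set v : k → ℝ := WithLp.equiv 2 (k → ℝ) x with hv
  have hx : x = (WithLp.equiv 2 (k → ℝ)).symm v := rfl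
  have key := hsq.dotProduct_mulVec_nonneg v
  rw [star_triv, sub_mulVec, smul_mulVec, one_mulVec, dotProduct_sub, dotProduct_smul,
    smul_eq_mul, sub_nonneg, ← mulVec_mulVec] at key
  show ‖(WithLp.equiv 2 (k → ℝ)).symm (M *ᵥ v)‖ ≤ c * ‖x‖
  have h1 := norm_euclid_sq (M *ᵥ v)
  have h2 : ‖x‖ ^ 2 = v ⬝ᵥ v := by rw [hx]; exact norm_euclid_sq v
  have key2 := dot_mulVec_symm hM.1 v (M *ᵥ v)
  nlinarith [norm_nonneg x, norm_nonneg ((WithLp.equiv 2 (k → ℝ)).symm (M *ᵥ v)),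
    mul_nonneg hc (norm_nonneg x)]




variable {m : Type*} [Fintype m] [DecidableEq m]

lemma psd_shift_of_opNorm_le {C : Matrix m k ℝ} {d : ℝ} (h : ‖C‖ ≤ d) :
    (d ^ 2 • (1 : Matrix k k ℝ) - Cᴴ * C).PosSemidef := by
  have hd : 0 ≤ d := le_trans (norm_nonneg _) h
  refine Matrix.PosSemidef.of_dotProduct_mulVec_nonneg ?_ ?_
  · rw [IsHermitian, conjTranspose_sub, conjTranspose_smul, conjTranspose_one,
      conjTranspose_mul, conjTranspose_conjTranspose]
    simp
  · intro v
    rw [star_triv, sub_mulVec, smul_mulVec, one_mulVec, dotProduct_sub, dotProduct_smul,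
      smul_eq_mul, sub_nonneg, ← mulVec_mulVec]
    have e : v ⬝ᵥ Cᴴ *ᵥ (C *ᵥ v) = (C *ᵥ v) ⬝ᵥ (C *ᵥ v) := by
      rw [dotProduct_mulVec, conjTranspose_eq_transpose_of_trivial, vecMul_transpose]
    rw [e]
    have h1 := norm_euclid_sq (C *ᵥ v)
    have h2 := norm_euclid_sq v
    have h3 : ‖(WithLp.equiv 2 (m → ℝ)).symm (C *ᵥ v)‖
        ≤ ‖C‖ * ‖(WithLp.equiv 2 (k → ℝ)).symm v‖ :=
      Matrix.l2_opNorm_mulVec C ((WithLp.equiv 2 (k → ℝ)).symm v)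
    have h4 : ‖(WithLp.equiv 2 (m → ℝ)).symm (C *ᵥ v)‖
        ≤ d * ‖(WithLp.equiv 2 (k → ℝ)).symm v‖ :=
      h3.trans (mul_le_mul_of_nonneg_right h (norm_nonneg _))
    have h5 := mul_self_le_mul_self (norm_nonneg ((WithLp.equiv 2 (m → ℝ)).symm (C *ᵥ v))) h4
    nlinarith [norm_nonneg ((WithLp.equiv 2 (k → ℝ)).symm v)]

lemma sqrt_det_ne {M : Matrix k k ℝ} (hM : M.PosDef) : IsUnit hM.posSemidef.sqrt.det := by
  have h2 : hM.posSemidef.sqrt.det * hM.posSemidef.sqrt.det = M.det := by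
    rw [← det_mul, hM.posSemidef.sqrt_mul_self]
  have := hM.det_pos
  refine isUnit_iff_ne_zero.mpr fun h0 => ?_
  rw [h0, mul_zero] at h2
  exact absurd h2.symm (ne_of_gt this)

lemma invsqrt_mul_self {M : Matrix k k ℝ} (hM : M.PosDef) :
    hM.posSemidef.sqrt⁻¹ * hM.posSemidef.sqrt⁻¹ = M⁻¹ := by
  rw [← Matrix.mul_inv_rev, hM.posSemidef.sqrt_mul_self]

lemma invsqrt_herm {M : Matrix k k ℝ} (hM : M.PosDef) :
    (hM.posSemidef.sqrt⁻¹)ᴴ = hM.posSemidef.sqrt⁻¹ := by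
  rw [Matrix.conjTranspose_nonsing_inv, hM.posSemidef.posSemidef_sqrt.1]

lemma invsqrt_conj_self {M : Matrix k k ℝ} (hM : M.PosDef) :
    hM.posSemidef.sqrt⁻¹ * M * hM.posSemidef.sqrt⁻¹ = 1 := by
  obtain ⟨S, hS, hSM⟩ : ∃ S, S = hM.posSemidef.sqrt ∧ S * S = M :=
    ⟨hM.posSemidef.sqrt, rfl, hM.posSemidef.sqrt_mul_self⟩
  have hdet : IsUnit S.det := hS ▸ sqrt_det_ne hM
  rw [← hS]
  nth_rewrite 1 [← hSM]
  rw [← Matrix.mul_assoc, Matrix.mul_assoc _ _ S⁻¹, Matrix.mul_nonsing_inv _ hdet,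
    Matrix.mul_one, Matrix.nonsing_inv_mul _ hdet]

lemma inv_shift {M : Matrix k k ℝ} (hM : M.PosDef) {c : ℝ} (hc : 0 < c)
    (h : (M - c • (1 : Matrix k k ℝ)).PosSemidef) :
    (c⁻¹ • (1 : Matrix k k ℝ) - M⁻¹).PosSemidef := by
  set S := hM.posSemidef.sqrt with hS
  have e : c⁻¹ • (S⁻¹ * (M - c • (1 : Matrix k k ℝ)) * (S⁻¹)ᴴ)
      = c⁻¹ • (1 : Matrix k k ℝ) - M⁻¹ := by
    rw [invsqrt_herm hM, Matrix.mul_sub, Matrix.sub_mul, Matrix.mul_smul, Matrix.smul_mul,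
      Matrix.mul_one, ← hS, invsqrt_conj_self hM, invsqrt_mul_self hM, smul_sub, smul_smul,
      inv_mul_cancel₀ (ne_of_gt hc), one_smul]
  rw [← e]
  exact psd_smul ((h.mul_mul_conjTranspose_same (S⁻¹))) (le_of_lt (inv_pos.mpr hc))

lemma posdef_shift_exists {M : Matrix k k ℝ} (hM : M.PosDef) :
    ∃ ε : ℝ, 0 < ε ∧ (M - ε • (1 : Matrix k k ℝ)).PosSemidef := by
  cases isEmpty_or_nonempty k with
  | inl hk =>
    refine ⟨1, one_pos, Matrix.PosSemidef.of_dotProduct_mulVec_nonneg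
      (Matrix.ext fun i _ => isEmptyElim i) fun x => ?_⟩
    simp [dotProduct]
  | inr hk =>
    set ε := Finset.univ.inf' Finset.univ_nonempty hM.1.eigenvalues with hε
    refine ⟨ε, ?_, ?_⟩
    · exact (Finset.lt_inf'_iff _).mpr fun i _ => hM.eigenvalues_pos i
    · have hspec := herm_spec_eq hM.1
      set U : Matrix k k ℝ := (hM.1.eigenvectorUnitary : Matrix k k ℝ) with hU
      have hUU : U * star U = 1 :=
        (Matrix.mem_unitaryGroup_iff).mp hM.1.eigenvectorUnitary.2
      have e : M - ε • (1 : Matrix k k ℝ)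
          = U * (diagonal (RCLike.ofReal ∘ hM.1.eigenvalues) - ε • 1) * star U := by
        rw [Matrix.mul_sub, Matrix.sub_mul, ← hspec, Matrix.mul_smul, Matrix.smul_mul,
          Matrix.mul_one, hUU]
      rw [e]
      have hd : (diagonal (RCLike.ofReal ∘ hM.1.eigenvalues) - ε • (1 : Matrix k k ℝ)).PosSemidef := by
        have : diagonal (RCLike.ofReal ∘ hM.1.eigenvalues) - ε • (1 : Matrix k k ℝ)
            = diagonal (fun i => hM.1.eigenvalues i - ε) := by
          rw [smul_one_eq_diagonal, ← diagonal_sub]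
          rfl
        rw [this]
        exact Matrix.posSemidef_diagonal_iff.mpr fun i =>
          sub_nonneg.mpr (Finset.inf'_le _ (Finset.mem_univ i))
      simpa [Matrix.star_eq_conjTranspose] using hd.mul_mul_conjTranspose_same U



lemma posdef_of_psd_det {M : Matrix k k ℝ} (hM : M.PosSemidef) (hd : IsUnit M.det) :
    M.PosDef := by
  refine Matrix.PosDef.of_dotProduct_mulVec_pos hM.1 fun x hx => ?_
  rcases lt_or_eq_of_le (hM.dotProduct_mulVec_nonneg x) with h | h
  · exact h
  · exfalso
    have h0 : M *ᵥ x = 0 := (hM.dotProduct_mulVec_zero_iff x).mp h.symm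
    have : x = 0 := by
      have := congrArg (fun y => M⁻¹ *ᵥ y) h0
      simpa [mulVec_mulVec, Matrix.nonsing_inv_mul _ hd] using this
    exact hx this

-- extraction of shifted diagonal blocks
variable {p q : Type*} [Fintype p] [Fintype q] [DecidableEq p] [DecidableEq q]

lemma block_shift₁₁ {A : Matrix p p ℝ} {B : Matrix p q ℝ} {C : Matrix q p ℝ} {D : Matrix q q ℝ}
    {c : ℝ} (h : (fromBlocks A B C D - c • (1 : Matrix (p ⊕ q) (p ⊕ q) ℝ)).PosSemidef) :
    (A - c • (1 : Matrix p p ℝ)).PosSemidef := by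
  have h2 := h.submatrix Sum.inl
  have e : (fromBlocks A B C D - c • (1 : Matrix (p ⊕ q) (p ⊕ q) ℝ)).submatrix Sum.inl Sum.inl
      = A - c • (1 : Matrix p p ℝ) := by
    ext i j
    simp [Matrix.one_apply, Sum.inl.injEq]
  rwa [e] at h2

lemma block_shift₂₂ {A : Matrix p p ℝ} {B : Matrix p q ℝ} {C : Matrix q p ℝ} {D : Matrix q q ℝ}
    {c : ℝ} (h : (fromBlocks A B C D - c • (1 : Matrix (p ⊕ q) (p ⊕ q) ℝ)).PosSemidef) :
    (D - c • (1 : Matrix q q ℝ)).PosSemidef := by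
  have h2 := h.submatrix Sum.inr
  have e : (fromBlocks A B C D - c • (1 : Matrix (p ⊕ q) (p ⊕ q) ℝ)).submatrix Sum.inr Sum.inr
      = D - c • (1 : Matrix q q ℝ) := by
    ext i j
    simp [Matrix.one_apply, Sum.inr.injEq]
  rwa [e] at h2



lemma inv_fromBlocks' (A : Matrix p p ℝ) (B : Matrix p q ℝ) (C : Matrix q p ℝ) (D : Matrix q q ℝ)
    (hA : IsUnit A.det) (hS : IsUnit (D - C * A⁻¹ * B).det) :
    (fromBlocks A B C D)⁻¹ =
      fromBlocks (A⁻¹ + A⁻¹ * B * (D - C * A⁻¹ * B)⁻¹ * C * A⁻¹)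
        (-(A⁻¹ * B * (D - C * A⁻¹ * B)⁻¹))
        (-((D - C * A⁻¹ * B)⁻¹ * C * A⁻¹)) ((D - C * A⁻¹ * B)⁻¹) := by
  obtain ⟨S, hSdef⟩ : ∃ S, S = D - C * A⁻¹ * B := ⟨_, rfl⟩
  rw [← hSdef]
  have hAi : A * A⁻¹ = 1 := Matrix.mul_nonsing_inv _ hA
  have hiA : A⁻¹ * A = 1 := Matrix.nonsing_inv_mul _ hA
  have hSi : S * S⁻¹ = 1 := Matrix.mul_nonsing_inv _ (hSdef ▸ hS)
  have cAp : ∀ Z : Matrix p p ℝ, A * (A⁻¹ * Z) = Z := fun Z => by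
    rw [← Matrix.mul_assoc, hAi, Matrix.one_mul]
  have cAq : ∀ Z : Matrix p q ℝ, A * (A⁻¹ * Z) = Z := fun Z => by
    rw [← Matrix.mul_assoc, hAi, Matrix.one_mul]
  have cSp : ∀ Z : Matrix q p ℝ, S * (S⁻¹ * Z) = Z := fun Z => by
    rw [← Matrix.mul_assoc, hSi, Matrix.one_mul]
  have cSq : ∀ Z : Matrix q q ℝ, S * (S⁻¹ * Z) = Z := fun Z => by
    rw [← Matrix.mul_assoc, hSi, Matrix.one_mul]
  have hD : D = S + C * A⁻¹ * B := by rw [hSdef]; abel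
  have e11 : A * (A⁻¹ + A⁻¹ * B * S⁻¹ * C * A⁻¹) + B * (-(S⁻¹ * C * A⁻¹)) = 1 := by
    simp only [Matrix.mul_add, Matrix.mul_neg, Matrix.mul_assoc, cAp, cAq, hAi]
    abel
  have e12 : A * (-(A⁻¹ * B * S⁻¹)) + B * S⁻¹ = 0 := by
    simp only [Matrix.mul_neg, Matrix.mul_assoc, cAp, cAq]
    abel
  have e21 : C * (A⁻¹ + A⁻¹ * B * S⁻¹ * C * A⁻¹) + D * (-(S⁻¹ * C * A⁻¹)) = 0 := by
    rw [hD]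
    simp only [Matrix.add_mul, Matrix.mul_add, Matrix.mul_neg, Matrix.neg_mul, Matrix.mul_assoc, cSp, cSq]
    abel
  have e22 : C * (-(A⁻¹ * B * S⁻¹)) + D * S⁻¹ = 1 := by
    rw [hD]
    simp only [Matrix.add_mul, Matrix.mul_neg, Matrix.mul_assoc, cSp, cSq, hSi]
    abel
  apply Matrix.inv_eq_right_inv
  rw [fromBlocks_multiply, e11, e12, e21, e22, fromBlocks_one]

lemma main_aux {p q : Type*} [Fintype p] [Fintype q] [DecidableEq p] [DecidableEq q]
    (A : Matrix p p ℝ) (B : Matrix p q ℝ) (D : Matrix q q ℝ)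
    (hA0 : A.PosSemidef) (hD0 : D.PosSemidef)
    (lam : ℝ) (hlam : 0 < lam)
    (hmin : (fromBlocks A B Bᴴ D - (lam ^ 2) • (1 : Matrix (p ⊕ q) (p ⊕ q) ℝ)).PosSemidef)
    (δ : ℝ) (hδ : δ = ‖hA0.sqrt⁻¹ * B * hD0.sqrt⁻¹‖) :
    ‖((fromBlocks A B Bᴴ D)⁻¹).toBlocks₁₂‖ ≤ (lam ^ 2)⁻¹ * δ * (1 - δ ^ 2)⁻¹ := by
  have hl2 : (0:ℝ) < lam ^ 2 := by positivity
  have hAsh : (A - lam ^ 2 • 1).PosSemidef := block_shift₁₁ hmin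
  have hDsh : (D - lam ^ 2 • 1).PosSemidef := block_shift₂₂ hmin
  have hA : A.PosDef := posdef_of_shift hl2 hAsh
  have hD : D.PosDef := posdef_of_shift hl2 hDsh
  have hΓ : (fromBlocks A B Bᴴ D).PosDef := posdef_of_shift hl2 hmin
  have hAdet : IsUnit A.det := isUnit_iff_ne_zero.mpr (ne_of_gt hA.det_pos)
  haveI : Invertible A := A.invertibleOfIsUnitDet hAdet
  have hSpsd : (D - Bᴴ * A⁻¹ * B).PosSemidef :=
    (PosDef.fromBlocks₁₁ B D hA).mp hΓ.posSemidef
  have hSdet : IsUnit (D - Bᴴ * A⁻¹ * B).det := by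
    have h1 : IsUnit (fromBlocks A B Bᴴ D).det := isUnit_iff_ne_zero.mpr (ne_of_gt hΓ.det_pos)
    rw [det_fromBlocks₁₁, invOf_eq_nonsing_inv] at h1
    exact isUnit_of_mul_isUnit_right h1
  have hS : (D - Bᴴ * A⁻¹ * B).PosDef := posdef_of_psd_det hSpsd hSdet
  obtain ⟨S, hSdefn⟩ : ∃ X, X = D - Bᴴ * A⁻¹ * B := ⟨_, rfl⟩
  rw [← hSdefn] at hSdet hS
  -- the sqrt kit
  have hδ' : δ = ‖hA.posSemidef.sqrt⁻¹ * B * hD.posSemidef.sqrt⁻¹‖ := hδ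
  obtain ⟨RA, hRAdef⟩ : ∃ X, X = hA.posSemidef.sqrt⁻¹ := ⟨_, rfl⟩
  obtain ⟨RD, hRDdef⟩ : ∃ X, X = hD.posSemidef.sqrt⁻¹ := ⟨_, rfl⟩
  obtain ⟨SD, hSDdef⟩ : ∃ X, X = hD.posSemidef.sqrt := ⟨_, rfl⟩
  rw [← hRAdef, ← hRDdef] at hδ'
  have hRAh : RAᴴ = RA := by rw [hRAdef]; exact invsqrt_herm hA
  have hRDh : RDᴴ = RD := by rw [hRDdef]; exact invsqrt_herm hD
  have hRA2 : RA * RA = A⁻¹ := by rw [hRAdef]; exact invsqrt_mul_self hA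
  have hRD2 : RD * RD = D⁻¹ := by rw [hRDdef]; exact invsqrt_mul_self hD
  have hRDD : RD * D * RD = 1 := by rw [hRDdef]; exact invsqrt_conj_self hD
  have hSDRD : SD * RD = 1 := by
    rw [hSDdef, hRDdef]; exact Matrix.mul_nonsing_inv _ (sqrt_det_ne hD)
  have hRDSD : RD * SD = 1 := by
    rw [hSDdef, hRDdef]; exact Matrix.nonsing_inv_mul _ (sqrt_det_ne hD)
  -- cancel helpers
  have cRA : ∀ Z : Matrix p q ℝ, RA * (RA * Z) = A⁻¹ * Z := fun Z => by
    rw [← Matrix.mul_assoc, hRA2]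
  have cRDSDq : ∀ Z : Matrix q q ℝ, RD * (SD * Z) = Z := fun Z => by
    rw [← Matrix.mul_assoc, hRDSD, Matrix.one_mul]
  have cSDRDq : ∀ Z : Matrix q q ℝ, SD * (RD * Z) = Z := fun Z => by
    rw [← Matrix.mul_assoc, hSDRD, Matrix.one_mul]
  -- C and Q
  obtain ⟨C, hCdef⟩ : ∃ X, X = RA * B * RD := ⟨_, rfl⟩
  have hCd : ‖C‖ = δ := by rw [hCdef, hδ']
  have hδ0 : 0 ≤ δ := hCd ▸ norm_nonneg C
  have hCC : Cᴴ * C = RD * (Bᴴ * (A⁻¹ * (B * RD))) := by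
    rw [hCdef, conjTranspose_mul, conjTranspose_mul, hRAh, hRDh]
    simp only [Matrix.mul_assoc, cRA]
  obtain ⟨Q, hQdef⟩ : ∃ X, X = 1 - Cᴴ * C := ⟨_, rfl⟩
  have hQeq : Q = RD * S * RD := by
    rw [hSdefn, hQdef, hCC, Matrix.mul_sub, Matrix.sub_mul, hRDD]
    simp only [Matrix.mul_assoc]
  have cS : ∀ Z : Matrix q q ℝ, S * (S⁻¹ * Z) = Z := fun Z => by
    rw [← Matrix.mul_assoc, Matrix.mul_nonsing_inv _ hSdet, Matrix.one_mul]
  have hQright : Q * (SD * (S⁻¹ * SD)) = 1 := by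
    rw [hQeq]
    simp only [Matrix.mul_assoc, cSDRDq, cS, cRDSDq]
    exact hRDSD
  have hQinv : Q⁻¹ = SD * (S⁻¹ * SD) := Matrix.inv_eq_right_inv hQright
  have hQpsd : Q.PosSemidef := by
    have := hS.posSemidef.mul_mul_conjTranspose_same RD
    rw [hRDh] at this
    rw [hQeq]
    exact this
  have hQpd : Q.PosDef := by
    refine posdef_of_psd_det hQpsd ?_
    have hdet := congrArg Matrix.det hQright
    rw [det_mul, det_one] at hdet
    exact IsUnit.of_mul_eq_one _ hdet
  -- delta^2 < 1
  have hδlt : δ ^ 2 < 1 := by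
    obtain ⟨ε, hε, hQeps⟩ := posdef_shift_exists hQpd
    have hc0 : (0:ℝ) ≤ max (1 - ε) 0 := le_max_right _ _
    have hshift : ((max (1 - ε) 0) • (1 : Matrix q q ℝ) - Cᴴ * C).PosSemidef := by
      have e : (max (1 - ε) 0) • (1 : Matrix q q ℝ) - Cᴴ * C
          = (Q - ε • 1) + ((max (1 - ε) 0 - (1 - ε)) • 1) := by
        rw [hQdef]; module
      rw [e]
      exact hQeps.add (psd_smul Matrix.PosSemidef.one (sub_nonneg.mpr (le_max_left _ _)))
    have hb : ‖Cᴴ * C‖ ≤ max (1 - ε) 0 :=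
      opNorm_le_of_psd (posSemidef_conjTranspose_mul_self C) hc0 hshift
    rw [Matrix.l2_opNorm_conjTranspose_mul_self, hCd] at hb
    have : max (1 - ε) 0 < 1 := max_lt (by linarith) one_pos
    calc δ ^ 2 = δ * δ := sq δ
    _ ≤ max (1 - ε) 0 := hb
    _ < 1 := this
  have hone : (0:ℝ) < 1 - δ ^ 2 := by linarith
  -- norm bounds
  have hinvsq : (lam ^ 2)⁻¹ = lam⁻¹ * lam⁻¹ := by rw [sq, mul_inv]
  have hnRA : ‖RA‖ ≤ lam⁻¹ := by
    have h1 : ‖RAᴴ * RA‖ = ‖RA‖ * ‖RA‖ := Matrix.l2_opNorm_conjTranspose_mul_self RA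
    rw [hRAh, hRA2] at h1
    have h2 : ‖A⁻¹‖ ≤ (lam ^ 2)⁻¹ :=
      opNorm_le_of_psd hA.posSemidef.inv (le_of_lt (inv_pos.mpr hl2)) (inv_shift hA hl2 hAsh)
    rw [h1, hinvsq] at h2
    nlinarith [norm_nonneg RA, inv_pos.mpr hlam]
  have hnRD : ‖RD‖ ≤ lam⁻¹ := by
    have h1 : ‖RDᴴ * RD‖ = ‖RD‖ * ‖RD‖ := Matrix.l2_opNorm_conjTranspose_mul_self RD
    rw [hRDh, hRD2] at h1
    have h2 : ‖D⁻¹‖ ≤ (lam ^ 2)⁻¹ :=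
      opNorm_le_of_psd hD.posSemidef.inv (le_of_lt (inv_pos.mpr hl2)) (inv_shift hD hl2 hDsh)
    rw [h1, hinvsq] at h2
    nlinarith [norm_nonneg RD, inv_pos.mpr hlam]
  have hnQ : ‖Q⁻¹‖ ≤ (1 - δ ^ 2)⁻¹ := by
    have hQshift : (Q - (1 - δ ^ 2) • (1 : Matrix q q ℝ)).PosSemidef := by
      have e : Q - (1 - δ ^ 2) • (1 : Matrix q q ℝ) = δ ^ 2 • 1 - Cᴴ * C := by
        rw [hQdef]; module
      rw [e]
      exact psd_shift_of_opNorm_le (le_of_eq hCd)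
    exact opNorm_le_of_psd hQpd.posSemidef.inv (le_of_lt (inv_pos.mpr hone))
      (inv_shift hQpd hone hQshift)
  -- factorization
  have hfac : RA * C * Q⁻¹ * RD = A⁻¹ * B * S⁻¹ := by
    rw [hQinv, hCdef]
    simp only [Matrix.mul_assoc, cRA, cRDSDq, hSDRD, Matrix.mul_one]
  -- final chain
  have hSdet' : IsUnit (D - Bᴴ * A⁻¹ * B).det := hSdefn ▸ hSdet
  rw [inv_fromBlocks' A B Bᴴ D hAdet hSdet', toBlocks_fromBlocks₁₂, norm_neg, ← hSdefn, ← hfac]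
  have m1 : ‖RA * C * Q⁻¹ * RD‖ ≤ ‖RA * C * Q⁻¹‖ * ‖RD‖ := Matrix.l2_opNorm_mul _ _
  have m2 : ‖RA * C * Q⁻¹‖ ≤ ‖RA * C‖ * ‖Q⁻¹‖ := Matrix.l2_opNorm_mul _ _
  have m3 : ‖RA * C‖ ≤ ‖RA‖ * ‖C‖ := Matrix.l2_opNorm_mul _ _
  have hlaminv : (0:ℝ) ≤ lam⁻¹ := le_of_lt (inv_pos.mpr hlam)
  have s1 : ‖RA‖ * ‖C‖ ≤ lam⁻¹ * δ :=
    mul_le_mul hnRA (le_of_eq hCd) (norm_nonneg _) hlaminv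
  have s2 : ‖RA * C‖ * ‖Q⁻¹‖ ≤ (lam⁻¹ * δ) * (1 - δ ^ 2)⁻¹ :=
    mul_le_mul (le_trans m3 s1) hnQ (norm_nonneg _) (by positivity)
  have s3 : ‖RA * C * Q⁻¹‖ * ‖RD‖ ≤ ((lam⁻¹ * δ) * (1 - δ ^ 2)⁻¹) * lam⁻¹ :=
    mul_le_mul (le_trans m2 s2) hnRD (norm_nonneg _) (by positivity)
  refine le_trans (le_trans m1 s3) (le_of_eq ?_)
  rw [hinvsq]; ring


end Aux

/-- bound on the operator norm of the (1,2) block of the inverse Gram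
matrix in terms of the smallest singular value `lam` of `[V W]` and the cosine-angle
norm `δ`. -/
theorem block_inverse_offdiag_bound {n r₁ r₂ : ℕ}
    (V : Matrix (Fin n) (Fin r₁) ℝ) (W : Matrix (Fin n) (Fin r₂) ℝ)
    (hV : V.rank = r₁) (hW : W.rank = r₂)
    (hVW : (Matrix.fromCols V W).rank = r₁ + r₂)
    (lam : ℝ) (hlam : 0 < lam)
    (hmin : (Matrix.fromBlocks (Vᴴ * V) (Vᴴ * W) (Wᴴ * V) (Wᴴ * W)
        - (lam ^ 2) • (1 : Matrix (Fin r₁ ⊕ Fin r₂) (Fin r₁ ⊕ Fin r₂) ℝ)).PosSemidef)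
    (δ : ℝ) (hδ : δ = opNorm (invSqrtGram V * (Vᴴ * W) * invSqrtGram W)) :
    opNorm (((Matrix.fromBlocks (Vᴴ * V) (Vᴴ * W) (Wᴴ * V) (Wᴴ * W))⁻¹).toBlocks₁₂) ≤
      (lam ^ 2)⁻¹ * δ * (1 - δ ^ 2)⁻¹ := by
  have hBH : Wᴴ * V = (Vᴴ * W)ᴴ := by
    rw [conjTranspose_mul, conjTranspose_conjTranspose]
  rw [hBH] at hmin ⊢
  exact Aux.main_aux (Vᴴ * V) (Vᴴ * W) (Wᴴ * W)
    (Matrix.posSemidef_conjTranspose_mul_self V)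
    (Matrix.posSemidef_conjTranspose_mul_self W) lam hlam hmin δ hδ
end

section
/- Let Γ be an invertible symmetric positive-definite 2×2 block matrix with ‖Γ⁻¹‖ ≤ λ⁻² and ‖[Γ⁻¹]₁₂‖ ≤ λ⁻² δ(1−δ²)⁻¹. Then for every integer r ≥ 1, the (1,2) block of the r-th power of Γ⁻¹ satisfies ‖[Γ^{−r}]₁₂‖ ≤ r λ^{−2r} δ(1−δ²)⁻¹. -/
open Matrix

open scoped Matrix.Norms.L2Operator

lemma opNorm_eq_norm {m n : Type*} [Fintype m] [Fintype n] [DecidableEq n]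
    (A : Matrix m n ℝ) : opNorm A = ‖A‖ := rfl

lemma opNorm_nonneg' {m n : Type*} [Fintype m] [Fintype n] [DecidableEq n]
    (A : Matrix m n ℝ) : 0 ≤ opNorm A := norm_nonneg _

lemma opNorm_mul_le' {n : Type*} [Fintype n] [DecidableEq n]
    (A B : Matrix n n ℝ) : opNorm (A * B) ≤ opNorm A * opNorm B := by
  simpa only [opNorm_eq_norm] using norm_mul_le A B

lemma opNorm_add_le' {m n : Type*} [Fintype m] [Fintype n] [DecidableEq n]
    (A B : Matrix m n ℝ) : opNorm (A + B) ≤ opNorm A + opNorm B := by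
  simpa only [opNorm_eq_norm] using norm_add_le A B

lemma opNorm_submatrix_le {m n m' n' : Type*} [Fintype m] [Fintype n]
    [DecidableEq m] [DecidableEq n]
    [Fintype m'] [Fintype n'] [DecidableEq n']
    (A : Matrix m n ℝ) (f : m' → m) (g : n' → n)
    (hf : Function.Injective f) (hg : Function.Injective g) :
    opNorm (A.submatrix f g) ≤ opNorm A := by
  rw [opNorm_eq_norm, opNorm_eq_norm, Matrix.l2_opNorm_def]
  apply ContinuousLinearMap.opNorm_le_bound _ (norm_nonneg (A : Matrix m n ℝ))
  intro x
  set x' : n → ℝ := Function.extend g (fun k => x k) 0 with hx'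
  set y : EuclideanSpace ℝ n := (WithLp.equiv 2 (n → ℝ)).symm x' with hy
  have hext_sum : ∀ (F : n → ℝ), (∀ j, (¬ ∃ k, g k = j) → F j = 0) →
      ∑ j, F j = ∑ k, F (g k) := by
    intro F hF
    rw [← Finset.sum_image (f := F) (g := g) (fun a _ b _ h => hg h)]
    refine (Finset.sum_subset (Finset.subset_univ _) ?_).symm
    intro j _ hj
    refine hF j ?_
    rintro ⟨k, rfl⟩
    exact hj (Finset.mem_image.mpr ⟨k, Finset.mem_univ _, rfl⟩)
  have hnorm_y : ‖y‖ = ‖x‖ := by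
    rw [EuclideanSpace.norm_eq, EuclideanSpace.norm_eq]
    congr 1
    have hyj : ∀ j, ‖y j‖ ^ 2 = x' j ^ 2 := by
      intro j; rw [Real.norm_eq_abs, sq_abs]; rfl
    simp_rw [hyj]
    rw [hext_sum (fun j => x' j ^ 2) (fun j hj => by
      have hz : x' j = 0 := by
        rw [hx', Function.extend_apply' _ _ _ hj]; rfl
      simp [hz])]
    refine Finset.sum_congr rfl fun k _ => ?_
    rw [hx', hg.extend_apply, Real.norm_eq_abs, sq_abs]
  have hmv : ∀ i' : m',
      ((A.submatrix f g) *ᵥ (fun k => x k)) i' = (A *ᵥ x') (f i') := by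
    intro i'
    simp only [Matrix.mulVec, dotProduct, Matrix.submatrix_apply]
    rw [hext_sum (fun j => A (f i') j * x' j) (fun j hj => by
      have hz : x' j = 0 := by
        rw [hx', Function.extend_apply' _ _ _ hj]; rfl
      simp [hz])]
    refine Finset.sum_congr rfl fun k _ => ?_
    rw [hx', hg.extend_apply]
  calc ‖(LinearMap.toContinuousLinearMap (Matrix.toEuclideanLin (A.submatrix f g))) x‖
      ≤ ‖(EuclideanSpace.equiv m ℝ).symm (A *ᵥ x')‖ := by
        rw [EuclideanSpace.norm_eq, EuclideanSpace.norm_eq]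
        apply Real.sqrt_le_sqrt
        have happ : ∀ i' : m', ‖(LinearMap.toContinuousLinearMap
            (Matrix.toEuclideanLin (A.submatrix f g))) x i'‖ ^ 2
            = ‖(A *ᵥ x') (f i')‖ ^ 2 := by
          intro i'
          congr 1
          show ‖(Matrix.toEuclideanLin (A.submatrix f g)) x i'‖ = _
          have : (Matrix.toEuclideanLin (A.submatrix f g)) x i'
              = ((A.submatrix f g) *ᵥ (fun k => x k)) i' := rfl
          rw [this, hmv i']
        simp_rw [happ]
        calc ∑ i' : m', ‖(A *ᵥ x') (f i')‖ ^ 2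
            = ∑ i ∈ Finset.image f Finset.univ, ‖(A *ᵥ x') i‖ ^ 2 := by
              rw [Finset.sum_image (fun a _ b _ h => hf h)]
          _ ≤ ∑ i, ‖((EuclideanSpace.equiv m ℝ).symm (A *ᵥ x')) i‖ ^ 2 := by
              refine Finset.sum_le_sum_of_subset_of_nonneg (Finset.subset_univ _) ?_
              intro i _ _
              positivity
    _ ≤ ‖A‖ * ‖y‖ := by
        have := Matrix.l2_opNorm_mulVec A y
        simpa [hy] using this
    _ = ‖A‖ * ‖x‖ := by rw [hnorm_y]

lemma mul_toBlocks₁₂ {r₁ r₂ : ℕ}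
    (M N : Matrix (Fin r₁ ⊕ Fin r₂) (Fin r₁ ⊕ Fin r₂) ℝ) :
    (M * N).toBlocks₁₂ =
      M.toBlocks₁₁ * N.toBlocks₁₂ + M.toBlocks₁₂ * N.toBlocks₂₂ := by
  have hM := Matrix.fromBlocks_toBlocks M
  have hN := Matrix.fromBlocks_toBlocks N
  conv_lhs => rw [← hM, ← hN, Matrix.fromBlocks_multiply]
  rfl

/-- telescoping bound on the (1,2) block of powers of the inverse of a
symmetric positive-definite 2×2 block matrix. -/
theorem block_inverse_power_offdiag_bound {r₁ r₂ : ℕ}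
    (Γ : Matrix (Fin r₁ ⊕ Fin r₂) (Fin r₁ ⊕ Fin r₂) ℝ)
    (hΓ : Γ.PosDef)
    (lam δ : ℝ) (hlam : 0 < lam)
    (hinv : opNorm Γ⁻¹ ≤ (lam ^ 2)⁻¹)
    (hoff : opNorm ((Γ⁻¹).toBlocks₁₂) ≤ (lam ^ 2)⁻¹ * δ * (1 - δ ^ 2)⁻¹) :
    ∀ r : ℕ, 1 ≤ r →
      opNorm (((Γ⁻¹) ^ r).toBlocks₁₂) ≤
        (r : ℝ) * (lam ^ (2 * r))⁻¹ * δ * (1 - δ ^ 2)⁻¹ := by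
  have hδc : 0 ≤ δ * (1 - δ ^ 2)⁻¹ := by
    by_contra h
    push_neg at h
    have h1 : (lam ^ 2)⁻¹ * δ * (1 - δ ^ 2)⁻¹ < 0 := by
      have hl : 0 < (lam ^ 2)⁻¹ := by positivity
      calc (lam ^ 2)⁻¹ * δ * (1 - δ ^ 2)⁻¹ = (lam ^ 2)⁻¹ * (δ * (1 - δ ^ 2)⁻¹) := by ring
        _ < 0 := mul_neg_of_pos_of_neg hl h
    exact absurd (le_trans (opNorm_nonneg' _) hoff) (not_le.mpr h1)
  have hpow : ∀ r : ℕ, opNorm ((Γ⁻¹) ^ r) ≤ ((lam ^ 2)⁻¹) ^ r := by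
    intro r
    induction r with
    | zero =>
        simp only [pow_zero]
        rw [opNorm_eq_norm, Matrix.l2_opNorm_def]
        refine ContinuousLinearMap.opNorm_le_bound _ zero_le_one fun x => ?_
        have h1 : (Matrix.toEuclideanLin
            (1 : Matrix (Fin r₁ ⊕ Fin r₂) (Fin r₁ ⊕ Fin r₂) ℝ)) x = x := by
          apply WithLp.equiv 2 _ |>.injective
          simp [Matrix.ofLp_toEuclideanLin_apply, Matrix.one_mulVec]
        calc ‖((Matrix.toEuclideanLin.trans LinearMap.toContinuousLinearMap)
                (1 : Matrix (Fin r₁ ⊕ Fin r₂) (Fin r₁ ⊕ Fin r₂) ℝ)) x‖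
            = ‖x‖ := by
              rw [LinearEquiv.trans_apply, LinearMap.coe_toContinuousLinearMap', h1]
          _ ≤ 1 * ‖x‖ := by rw [one_mul]
    | succ k ih =>
        rw [pow_succ, pow_succ]
        calc opNorm ((Γ⁻¹) ^ k * Γ⁻¹) ≤ opNorm ((Γ⁻¹) ^ k) * opNorm Γ⁻¹ :=
              opNorm_mul_le' _ _
          _ ≤ ((lam ^ 2)⁻¹) ^ k * (lam ^ 2)⁻¹ :=
              mul_le_mul ih hinv (opNorm_nonneg' _) (by positivity)
  have hblk11 : ∀ r : ℕ, opNorm (((Γ⁻¹) ^ r).toBlocks₁₁) ≤ ((lam ^ 2)⁻¹) ^ r := by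
    intro r
    exact le_trans (opNorm_submatrix_le _ _ _ Sum.inl_injective Sum.inl_injective)
      (hpow r)
  have hblk22 : opNorm ((Γ⁻¹).toBlocks₂₂) ≤ (lam ^ 2)⁻¹ := by
    exact le_trans (opNorm_submatrix_le _ _ _ Sum.inr_injective Sum.inr_injective) hinv
  have key : ∀ r : ℕ, 1 ≤ r →
      opNorm (((Γ⁻¹) ^ r).toBlocks₁₂) ≤
        (r : ℝ) * ((lam ^ 2)⁻¹) ^ r * (δ * (1 - δ ^ 2)⁻¹) := by
    intro r hr
    induction r with
    | zero => omega
    | succ k ih =>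
        by_cases hk : 1 ≤ k
        · have ihk := ih hk
          rw [pow_succ, mul_toBlocks₁₂]
          have h1 : opNorm (((Γ⁻¹) ^ k).toBlocks₁₁ * (Γ⁻¹).toBlocks₁₂) ≤
              ((lam ^ 2)⁻¹) ^ k * ((lam ^ 2)⁻¹ * (δ * (1 - δ ^ 2)⁻¹)) := by
            calc opNorm (((Γ⁻¹) ^ k).toBlocks₁₁ * (Γ⁻¹).toBlocks₁₂)
                ≤ opNorm (((Γ⁻¹) ^ k).toBlocks₁₁) * opNorm ((Γ⁻¹).toBlocks₁₂) :=
                  Matrix.l2_opNorm_mul _ _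
              _ ≤ ((lam ^ 2)⁻¹) ^ k * ((lam ^ 2)⁻¹ * (δ * (1 - δ ^ 2)⁻¹)) := by
                  refine mul_le_mul (hblk11 k) ?_ (opNorm_nonneg' _) (by positivity)
                  calc opNorm ((Γ⁻¹).toBlocks₁₂) ≤ (lam ^ 2)⁻¹ * δ * (1 - δ ^ 2)⁻¹ := hoff
                    _ = (lam ^ 2)⁻¹ * (δ * (1 - δ ^ 2)⁻¹) := by ring
          have h2 : opNorm (((Γ⁻¹) ^ k).toBlocks₁₂ * (Γ⁻¹).toBlocks₂₂) ≤
              ((k : ℝ) * ((lam ^ 2)⁻¹) ^ k * (δ * (1 - δ ^ 2)⁻¹)) * (lam ^ 2)⁻¹ := by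
            calc opNorm (((Γ⁻¹) ^ k).toBlocks₁₂ * (Γ⁻¹).toBlocks₂₂)
                ≤ opNorm (((Γ⁻¹) ^ k).toBlocks₁₂) * opNorm ((Γ⁻¹).toBlocks₂₂) :=
                  Matrix.l2_opNorm_mul _ _
              _ ≤ ((k : ℝ) * ((lam ^ 2)⁻¹) ^ k * (δ * (1 - δ ^ 2)⁻¹)) * (lam ^ 2)⁻¹ :=
                  mul_le_mul ihk hblk22 (opNorm_nonneg' _) (by positivity)
          calc opNorm (((Γ⁻¹) ^ k).toBlocks₁₁ * (Γ⁻¹).toBlocks₁₂ +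
                  ((Γ⁻¹) ^ k).toBlocks₁₂ * (Γ⁻¹).toBlocks₂₂)
              ≤ opNorm (((Γ⁻¹) ^ k).toBlocks₁₁ * (Γ⁻¹).toBlocks₁₂) +
                  opNorm (((Γ⁻¹) ^ k).toBlocks₁₂ * (Γ⁻¹).toBlocks₂₂) := opNorm_add_le' _ _
            _ ≤ ((lam ^ 2)⁻¹) ^ k * ((lam ^ 2)⁻¹ * (δ * (1 - δ ^ 2)⁻¹)) +
                  ((k : ℝ) * ((lam ^ 2)⁻¹) ^ k * (δ * (1 - δ ^ 2)⁻¹)) * (lam ^ 2)⁻¹ :=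
                add_le_add h1 h2
            _ = ((k : ℕ) + 1 : ℝ) * ((lam ^ 2)⁻¹) ^ (k + 1) * (δ * (1 - δ ^ 2)⁻¹) := by
                rw [pow_succ]; ring
            _ = (((k + 1 : ℕ)) : ℝ) * ((lam ^ 2)⁻¹) ^ (k + 1) * (δ * (1 - δ ^ 2)⁻¹) := by
                push_cast; ring
        · have hk0 : k = 0 := by omega
          subst hk0
          simpa using le_trans hoff (by push_cast; ring_nf; rfl)
  intro r hr
  have := key r hr
  have heq : ((lam ^ 2)⁻¹) ^ r = (lam ^ (2 * r))⁻¹ := by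
    rw [inv_pow, ← pow_mul]
  rw [heq] at this
  calc opNorm (((Γ⁻¹) ^ r).toBlocks₁₂) ≤
      (r : ℝ) * (lam ^ (2 * r))⁻¹ * (δ * (1 - δ ^ 2)⁻¹) := this
    _ = (r : ℝ) * (lam ^ (2 * r))⁻¹ * δ * (1 - δ ^ 2)⁻¹ := by ring
end

section
/- Let W̄ be a symmetric random matrix of dimension N whose odd moments vanish (E W̄^{2p+1} = 0 for all p ≥ 0) and whose even moments satisfy E W̄^{2p} ⪯ σ^{2p} p! · I for all p ≥ 1, for some σ > 0. Then for every λ ∈ ℝ with |λ|σ < 1, the matrix moment generating function satisfies E exp(λ W̄) ⪯ exp(λ²σ²/2 · (1−λ²σ²)⁻¹ · I); in particular for |λ|σ ≤ 1/√2, E exp(λW̄) ⪯ exp(λ²σ² I). -/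
open Matrix MeasureTheory

attribute [local instance] Matrix.linftyOpNormedRing Matrix.linftyOpNormedAlgebra

/-- The matrix exponential of a square real matrix. -/
noncomputable def mexp {N : ℕ} (A : Matrix (Fin N) (Fin N) ℝ) : Matrix (Fin N) (Fin N) ℝ :=
  NormedSpace.exp A

open Nat

section Aux

/-- quadratic form as a continuous linear map -/
noncomputable def qf {N : ℕ} (x : Fin N → ℝ) : Matrix (Fin N) (Fin N) ℝ →L[ℝ] ℝ :=
  LinearMap.toContinuousLinearMap
    { toFun := fun B => x ⬝ᵥ B *ᵥ x
      map_add' := by intros; simp [Matrix.add_mulVec, dotProduct_add]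
      map_smul' := by intros; simp [Matrix.smul_mulVec] }

lemma exp_qf {N : ℕ} (x : Fin N → ℝ) (A : Matrix (Fin N) (Fin N) ℝ) :
    x ⬝ᵥ (NormedSpace.exp A) *ᵥ x
      = ∑' (k : ℕ), (k ! : ℝ)⁻¹ * (x ⬝ᵥ (A ^ k) *ᵥ x) := by
  have hs : Summable fun k : ℕ => ((k ! : ℝ)⁻¹) • A ^ k :=
    NormedSpace.expSeries_summable' (𝕂 := ℝ) A
  rw [show x ⬝ᵥ (NormedSpace.exp A) *ᵥ x = qf x (NormedSpace.exp A) from rfl,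
    NormedSpace.exp_eq_tsum ℝ, (qf x).map_tsum hs]
  simp [qf, smul_mulVec]

lemma pow_split {N : ℕ} {S : Matrix (Fin N) (Fin N) ℝ} (hS : S.IsSymm)
    (p q : ℕ) (x : Fin N → ℝ) :
    x ⬝ᵥ (S ^ (p + q)) *ᵥ x = (S ^ p *ᵥ x) ⬝ᵥ (S ^ q *ᵥ x) := by
  have h : (S ^ p)ᵀ = S ^ p := by rw [transpose_pow, hS.eq]
  rw [pow_add, ← mulVec_mulVec, dotProduct_mulVec, ← mulVec_transpose, h]

lemma even_nonneg {N : ℕ} {S : Matrix (Fin N) (Fin N) ℝ} (hS : S.IsSymm)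
    (p : ℕ) (x : Fin N → ℝ) : 0 ≤ x ⬝ᵥ (S ^ (2 * p)) *ᵥ x := by
  rw [two_mul, pow_split hS]
  exact Finset.sum_nonneg fun i _ => mul_self_nonneg _

lemma odd_abs_le {N : ℕ} {S : Matrix (Fin N) (Fin N) ℝ} (hS : S.IsSymm)
    (p : ℕ) (x : Fin N → ℝ) :
    |x ⬝ᵥ (S ^ (2 * p + 1)) *ᵥ x|
      ≤ (x ⬝ᵥ (S ^ (2 * p)) *ᵥ x + x ⬝ᵥ (S ^ (2 * p + 2)) *ᵥ x) / 2 := by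
  have h1 : x ⬝ᵥ (S ^ (2 * p + 1)) *ᵥ x = (S ^ p *ᵥ x) ⬝ᵥ (S ^ (p + 1) *ᵥ x) := by
    rw [show 2 * p + 1 = p + (p + 1) by ring, pow_split hS]
  have h2 : x ⬝ᵥ (S ^ (2 * p)) *ᵥ x = (S ^ p *ᵥ x) ⬝ᵥ (S ^ p *ᵥ x) := by
    rw [two_mul, pow_split hS]
  have h3 : x ⬝ᵥ (S ^ (2 * p + 2)) *ᵥ x = (S ^ (p + 1) *ᵥ x) ⬝ᵥ (S ^ (p + 1) *ᵥ x) := by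
    rw [show 2 * p + 2 = (p + 1) + (p + 1) by ring, pow_split hS]
  set u := S ^ p *ᵥ x
  set v := S ^ (p + 1) *ᵥ x
  have hm : 0 ≤ (u - v) ⬝ᵥ (u - v) := Finset.sum_nonneg fun i _ => mul_self_nonneg _
  have hp : 0 ≤ (u + v) ⬝ᵥ (u + v) := Finset.sum_nonneg fun i _ => mul_self_nonneg _
  have em : (u - v) ⬝ᵥ (u - v) = u ⬝ᵥ u - 2 * (u ⬝ᵥ v) + v ⬝ᵥ v := by
    simp [sub_dotProduct, dotProduct_sub, dotProduct_comm v u]; ring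
  have ep : (u + v) ⬝ᵥ (u + v) = u ⬝ᵥ u + 2 * (u ⬝ᵥ v) + v ⬝ᵥ v := by
    simp [add_dotProduct, dotProduct_add, dotProduct_comm v u]; ring
  rw [h1, h2, h3, abs_le]
  constructor <;> nlinarith [hm, hp]

variable {N : ℕ} {Ω : Type*} [MeasurableSpace Ω] {μ : Measure Ω}

lemma qf_expand (x : Fin N → ℝ) (B : Matrix (Fin N) (Fin N) ℝ) :
    x ⬝ᵥ B *ᵥ x = ∑ i, ∑ j, x i * B i j * x j := by
  simp [dotProduct, mulVec, Finset.mul_sum, mul_assoc]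

lemma integrable_qf (g : Ω → Matrix (Fin N) (Fin N) ℝ)
    (hg : ∀ i j, Integrable (fun ω => g ω i j) μ) (x : Fin N → ℝ) :
    Integrable (fun ω => x ⬝ᵥ (g ω) *ᵥ x) μ := by
  simp only [qf_expand]
  exact integrable_finset_sum _ fun i _ => integrable_finset_sum _ fun j _ =>
    (((hg i j).const_mul (x i)).mul_const (x j))

lemma integral_qf (g : Ω → Matrix (Fin N) (Fin N) ℝ)
    (hg : ∀ i j, Integrable (fun ω => g ω i j) μ) (x : Fin N → ℝ) :
    ∫ ω, x ⬝ᵥ (g ω) *ᵥ x ∂μ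
      = x ⬝ᵥ (Matrix.of fun i j => ∫ ω, g ω i j ∂μ) *ᵥ x := by
  simp only [qf_expand]
  rw [integral_finset_sum _ fun i _ => integrable_finset_sum _ fun j _ =>
    (((hg i j).const_mul (x i)).mul_const (x j))]
  refine Finset.sum_congr rfl fun i _ => ?_
  rw [integral_finset_sum _ fun j _ => (((hg i j).const_mul (x i)).mul_const (x j))]
  refine Finset.sum_congr rfl fun j _ => ?_
  rw [integral_mul_const, integral_const_mul]
  rfl

lemma fact2 (p : ℕ) : 2 ^ p * (p ! * p !) ≤ (2 * p)! := by
  induction p with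
  | zero => simp
  | succ p ih =>
    have h : 2 * (p + 1) = (2 * p + 1) + 1 := by ring
    rw [h, Nat.factorial_succ, Nat.factorial_succ, Nat.factorial_succ]
    have h1 : 2 ^ (p+1) * ((p+1) * p ! * ((p+1) * p !)) = (2*(p+1)*(p+1)) * (2^p*(p ! * p !)) := by ring
    rw [h1]
    have h2 : 2*(p+1)*(p+1) ≤ (2*p+1+1)*(2*p+1) := by nlinarith
    calc (2*(p+1)*(p+1)) * (2^p*(p ! * p !)) ≤ ((2*p+1+1)*(2*p+1)) * (2*p)! :=
          Nat.mul_le_mul h2 ih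
      _ = (2*p+1+1) * ((2*p+1) * (2*p)!) := by ring

lemma even_coef {t : ℝ} (ht : 0 ≤ t) (p : ℕ) :
    (((2 * p)! : ℝ))⁻¹ * t ^ p * (p ! : ℝ) ≤ (t / 2) ^ p / (p ! : ℝ) := by
  have F0 : (0:ℝ) < (p ! : ℝ) := by exact_mod_cast Nat.factorial_pos p
  have G0 : (0:ℝ) < ((2 * p)! : ℝ) := by exact_mod_cast Nat.factorial_pos (2 * p)
  have key : (2:ℝ) ^ p * ((p ! : ℝ) * (p ! : ℝ)) ≤ ((2 * p)! : ℝ) := by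
    exact_mod_cast fact2 p
  have h1 : (((2 * p)! : ℝ))⁻¹ * t ^ p * (p ! : ℝ) = t ^ p * (p ! : ℝ) / ((2 * p)! : ℝ) := by
    ring
  rw [h1, div_pow, div_div, div_le_div_iff₀ G0 (by positivity)]
  have htp : (0:ℝ) ≤ t ^ p := pow_nonneg ht p
  nlinarith [mul_le_mul_of_nonneg_left key htp]

lemma odd_coef {lam σ : ℝ} (hσ : 0 ≤ σ) (p : ℕ) :
    (((2 * p + 1)! : ℝ))⁻¹ * |lam| ^ (2 * p + 1) *
        ((σ ^ (2 * p) * (p ! : ℝ) + σ ^ (2 * p + 2) * ((p + 1)! : ℝ)) / 2)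
      ≤ (|lam| * (1 + σ ^ 2)) * ((lam ^ 2 * σ ^ 2 / 2) ^ p / (p ! : ℝ)) := by
  have F0 : (0:ℝ) < (p ! : ℝ) := by exact_mod_cast Nat.factorial_pos p
  have G0 : (0:ℝ) < ((2 * p + 1)! : ℝ) := by exact_mod_cast Nat.factorial_pos (2 * p + 1)
  have key : (2:ℝ) ^ p * ((p ! : ℝ) * (p ! : ℝ)) ≤ ((2 * p)! : ℝ) := by
    exact_mod_cast fact2 p
  have hfs : ((2 * p + 1)! : ℝ) = (2 * p + 1) * ((2 * p)! : ℝ) := by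
    rw [Nat.factorial_succ]; push_cast; ring
  have hl : (0:ℝ) ≤ |lam| := abs_nonneg lam
  have hl2 : |lam| ^ (2 * p + 1) = |lam| * (lam ^ 2) ^ p := by
    rw [pow_succ, pow_mul, sq_abs, mul_comm]
  have hfp1 : ((p + 1)! : ℝ) = (p + 1) * (p ! : ℝ) := by
    rw [Nat.factorial_succ]; push_cast; ring
  have ht : (0:ℝ) ≤ lam ^ 2 := sq_nonneg lam
  have t1 : (((2 * p + 1)! : ℝ))⁻¹ * (σ ^ (2 * p) * (p ! : ℝ))
      ≤ σ ^ (2 * p) / ((2:ℝ) ^ p * (p ! : ℝ)) := by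
    rw [inv_mul_eq_div, div_le_div_iff₀ G0 (by positivity)]
    have hg : ((2 * p)! : ℝ) ≤ ((2 * p + 1)! : ℝ) := by
      exact_mod_cast Nat.factorial_le (by omega)
    nlinarith [pow_nonneg hσ (2 * p), mul_le_mul_of_nonneg_left key (pow_nonneg hσ (2*p))]
  have t2 : (((2 * p + 1)! : ℝ))⁻¹ * (σ ^ (2 * p + 2) * ((p + 1)! : ℝ))
      ≤ σ ^ (2 * p + 2) / ((2:ℝ) ^ p * (p ! : ℝ)) := by
    rw [inv_mul_eq_div, div_le_div_iff₀ G0 (by positivity), hfs, hfp1]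
    have hA : ((p:ℝ) + 1) * ((2:ℝ) ^ p * ((p ! : ℝ) * (p ! : ℝ))) ≤ ((p:ℝ)+1) * ((2*p)! : ℝ) :=
      mul_le_mul_of_nonneg_left key (by positivity)
    have hB : ((p:ℝ) + 1) * ((2*p)! : ℝ) ≤ (2*(p:ℝ)+1) * ((2*p)! : ℝ) := by
      have : (0:ℝ) < ((2*p)! : ℝ) := by exact_mod_cast Nat.factorial_pos (2*p)
      nlinarith [Nat.cast_nonneg (α := ℝ) p]
    nlinarith [mul_le_mul_of_nonneg_left (hA.trans hB) (pow_nonneg hσ (2*p+2)), pow_nonneg hσ (2*p+2)]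
  have hC : (0:ℝ) ≤ |lam| * (lam ^ 2) ^ p := by positivity
  have hR : (lam ^ 2 * σ ^ 2 / 2) ^ p / (p ! : ℝ) = (lam ^ 2) ^ p * σ ^ (2 * p) / ((2:ℝ) ^ p * (p ! : ℝ)) := by
    have h : (σ ^ 2) ^ p = σ ^ (2 * p) := by rw [← pow_mul, mul_comm]
    rw [div_pow, mul_pow, h, div_div]
  have hσ2 : σ ^ (2 * p + 2) = σ ^ (2 * p) * σ ^ 2 := by rw [pow_add]
  have step1 : (((2 * p + 1)! : ℝ))⁻¹ * |lam| ^ (2 * p + 1) *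
        ((σ ^ (2 * p) * (p ! : ℝ) + σ ^ (2 * p + 2) * ((p + 1)! : ℝ)) / 2)
      = |lam| * (lam ^ 2) ^ p *
        (((((2 * p + 1)! : ℝ))⁻¹ * (σ ^ (2 * p) * (p ! : ℝ)) +
          (((2 * p + 1)! : ℝ))⁻¹ * (σ ^ (2 * p + 2) * ((p + 1)! : ℝ))) / 2) := by
    rw [hl2]; ring
  rw [step1, hR]
  have step2 : |lam| * (lam ^ 2) ^ p *
        (((((2 * p + 1)! : ℝ))⁻¹ * (σ ^ (2 * p) * (p ! : ℝ)) +
          (((2 * p + 1)! : ℝ))⁻¹ * (σ ^ (2 * p + 2) * ((p + 1)! : ℝ))) / 2)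
      ≤ |lam| * (lam ^ 2) ^ p *
        ((σ ^ (2 * p) / ((2:ℝ) ^ p * (p ! : ℝ)) + σ ^ (2 * p + 2) / ((2:ℝ) ^ p * (p ! : ℝ))) / 2) := by
    apply mul_le_mul_of_nonneg_left _ hC
    linarith [t1, t2]
  refine step2.trans ?_
  have hK : (0:ℝ) ≤ |lam| * (lam ^ 2) ^ p * σ ^ (2 * p) / ((2:ℝ) ^ p * (p ! : ℝ)) := by positivity
  have h1σ : (0:ℝ) ≤ 1 + σ ^ 2 := by positivity
  rw [hσ2]
  have expand : |lam| * (lam ^ 2) ^ p *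
        ((σ ^ (2 * p) / ((2:ℝ) ^ p * (p ! : ℝ)) + σ ^ (2 * p) * σ ^ 2 / ((2:ℝ) ^ p * (p ! : ℝ))) / 2)
      = (|lam| * (lam ^ 2) ^ p * σ ^ (2 * p) / ((2:ℝ) ^ p * (p ! : ℝ))) * ((1 + σ ^ 2) / 2) := by
    ring
  have expand2 : |lam| * (1 + σ ^ 2) * ((lam ^ 2) ^ p * σ ^ (2 * p) / ((2:ℝ) ^ p * (p ! : ℝ)))
      = (|lam| * (lam ^ 2) ^ p * σ ^ (2 * p) / ((2:ℝ) ^ p * (p ! : ℝ))) * (1 + σ ^ 2) := by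
    ring
  rw [expand, expand2]
  nlinarith [mul_nonneg hK h1σ]

end Aux
section Key

variable {N : ℕ} {Ω : Type*} [MeasurableSpace Ω]

set_option maxHeartbeats 1000000 in
lemma key_bound (μ : Measure Ω) [IsProbabilityMeasure μ]
    (W : Ω → Matrix (Fin N) (Fin N) ℝ) (σ : ℝ) (hσ : 0 < σ)
    (hsymm : ∀ ω, (W ω).IsSymm)
    (hint : ∀ (k : ℕ) (i j : Fin N), Integrable (fun ω => ((W ω) ^ k) i j) μ)
    (hodd : ∀ (p : ℕ) (i j : Fin N), ∫ ω, ((W ω) ^ (2 * p + 1)) i j ∂μ = 0)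
    (heven : ∀ p : ℕ, 1 ≤ p →
      ((σ ^ (2 * p) * (Nat.factorial p : ℝ)) • (1 : Matrix (Fin N) (Fin N) ℝ) -
        Matrix.of fun i j => ∫ ω, ((W ω) ^ (2 * p)) i j ∂μ).PosSemidef)
    (lam : ℝ) (x : Fin N → ℝ) :
    ∫ ω, x ⬝ᵥ (mexp (lam • W ω)) *ᵥ x ∂μ
      ≤ Real.exp (lam ^ 2 * σ ^ 2 / 2) * (x ⬝ᵥ x) := by
  set t : ℝ := lam ^ 2 * σ ^ 2 with ht_def
  have ht0 : 0 ≤ t := by rw [ht_def]; positivity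
  set X : ℝ := x ⬝ᵥ x with hX_def
  have hX0 : 0 ≤ X := Finset.sum_nonneg fun i _ => mul_self_nonneg _
  set q : ℕ → Ω → ℝ := fun k ω => x ⬝ᵥ ((W ω) ^ k) *ᵥ x with hq_def
  set f : ℕ → Ω → ℝ := fun k ω => ((k ! : ℝ))⁻¹ * lam ^ k * q k ω with hf_def
  have hq_int : ∀ k, Integrable (q k) μ := fun k => integrable_qf _ (hint k) x
  have hf_int : ∀ k, Integrable (f k) μ := fun k => (hq_int k).const_mul _
  have hqe_nn : ∀ p ω, 0 ≤ q (2 * p) ω := fun p ω => even_nonneg (hsymm ω) p x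
  have hm_even : ∀ p : ℕ, ∫ ω, q (2 * p) ω ∂μ ≤ σ ^ (2 * p) * (p ! : ℝ) * X := by
    intro p
    rcases Nat.eq_zero_or_pos p with rfl | hp
    · simp [hq_def, Matrix.one_mulVec, hX_def, integral_const]
    · have h := (heven p hp).dotProduct_mulVec_nonneg x
      have hswap : ∫ ω, q (2 * p) ω ∂μ
          = x ⬝ᵥ (Matrix.of fun i j => ∫ ω, ((W ω) ^ (2 * p)) i j ∂μ) *ᵥ x :=
        integral_qf _ (hint (2 * p)) x
      rw [hswap]
      simp only [Matrix.sub_mulVec, Matrix.smul_mulVec, Matrix.one_mulVec,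
        dotProduct_sub, dotProduct_smul, smul_eq_mul, star_trivial] at h
      rw [← hX_def] at h
      linarith [h]
  have hm_odd : ∀ p : ℕ, ∫ ω, q (2 * p + 1) ω ∂μ = 0 := by
    intro p
    have hswap : ∫ ω, q (2 * p + 1) ω ∂μ
        = x ⬝ᵥ (Matrix.of fun i j => ∫ ω, ((W ω) ^ (2 * p + 1)) i j ∂μ) *ᵥ x :=
      integral_qf _ (hint (2 * p + 1)) x
    rw [hswap]
    have hz : (Matrix.of fun i j => ∫ ω, ((W ω) ^ (2 * p + 1)) i j ∂μ)
        = (0 : Matrix (Fin N) (Fin N) ℝ) := by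
      ext i j; exact hodd p i j
    rw [hz]; simp
  have hterm : ∀ p : ℕ, ∫ ω, f (2 * p) ω ∂μ ≤ (t / 2) ^ p / (p ! : ℝ) * X := by
    intro p
    have hlam2p : (0:ℝ) ≤ lam ^ (2 * p) := Even.pow_nonneg (even_two_mul p) lam
    have hc : (0:ℝ) ≤ (((2 * p)! : ℝ))⁻¹ * lam ^ (2 * p) := by positivity
    have h1 : ∫ ω, f (2 * p) ω ∂μ
        = (((2 * p)! : ℝ))⁻¹ * lam ^ (2 * p) * ∫ ω, q (2 * p) ω ∂μ := by
      simp only [hf_def]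
      exact integral_const_mul _ _
    rw [h1]
    have h2 := mul_le_mul_of_nonneg_left (hm_even p) hc
    refine h2.trans ?_
    have h3 : (((2 * p)! : ℝ))⁻¹ * lam ^ (2 * p) * (σ ^ (2 * p) * (p ! : ℝ) * X)
        = ((((2 * p)! : ℝ))⁻¹ * t ^ p * (p ! : ℝ)) * X := by
      rw [ht_def, mul_pow, ← pow_mul, ← pow_mul]; ring
    rw [h3]
    exact mul_le_mul_of_nonneg_right (even_coef ht0 p) hX0
  have habs_even : ∀ p : ℕ, ∫ ω, ‖f (2 * p) ω‖ ∂μ ≤ (t / 2) ^ p / (p ! : ℝ) * X := by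
    intro p
    have hnn : ∀ ω, ‖f (2 * p) ω‖ = f (2 * p) ω := by
      intro ω
      have hlam2p : (0:ℝ) ≤ lam ^ (2 * p) := Even.pow_nonneg (even_two_mul p) lam
      have hq0 := hqe_nn p ω
      have : 0 ≤ f (2 * p) ω := by
        simp only [hf_def]
        positivity
      rw [Real.norm_eq_abs, abs_of_nonneg this]
    calc ∫ ω, ‖f (2 * p) ω‖ ∂μ = ∫ ω, f (2 * p) ω ∂μ :=
          integral_congr_ae (Filter.Eventually.of_forall hnn)
      _ ≤ _ := hterm p
  have habs_odd : ∀ p : ℕ, ∫ ω, ‖f (2 * p + 1) ω‖ ∂μ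
      ≤ (|lam| * (1 + σ ^ 2)) * ((t / 2) ^ p / (p ! : ℝ)) * X := by
    intro p
    have hc : (0:ℝ) ≤ (((2 * p + 1)! : ℝ))⁻¹ * |lam| ^ (2 * p + 1) := by positivity
    have hptwise : ∀ ω, ‖f (2 * p + 1) ω‖
        ≤ (((2 * p + 1)! : ℝ))⁻¹ * |lam| ^ (2 * p + 1) *
            ((q (2 * p) ω + q (2 * p + 2) ω) / 2) := by
      intro ω
      have h1 : ‖f (2 * p + 1) ω‖
          = (((2 * p + 1)! : ℝ))⁻¹ * |lam| ^ (2 * p + 1) * |q (2 * p + 1) ω| := by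
        simp only [hf_def, Real.norm_eq_abs, abs_mul, abs_inv, abs_pow, Nat.abs_cast]
      rw [h1]
      exact mul_le_mul_of_nonneg_left (odd_abs_le (hsymm ω) p x) hc
    have hInt_rhs : Integrable (fun ω => (((2 * p + 1)! : ℝ))⁻¹ * |lam| ^ (2 * p + 1) *
        ((q (2 * p) ω + q (2 * p + 2) ω) / 2)) μ :=
      (((hq_int (2 * p)).add (hq_int (2 * p + 2))).div_const 2).const_mul _
    have h2 : ∫ ω, ‖f (2 * p + 1) ω‖ ∂μ
        ≤ ∫ ω, (((2 * p + 1)! : ℝ))⁻¹ * |lam| ^ (2 * p + 1) *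
            ((q (2 * p) ω + q (2 * p + 2) ω) / 2) ∂μ :=
      integral_mono (hf_int (2 * p + 1)).norm hInt_rhs hptwise
    refine h2.trans ?_
    rw [integral_const_mul, integral_div, integral_add (hq_int (2 * p)) (hq_int (2 * p + 2))]
    have hm2 : ∫ ω, q (2 * p + 2) ω ∂μ ≤ σ ^ (2 * p + 2) * ((p + 1)! : ℝ) * X := by
      have := hm_even (p + 1)
      rwa [show 2 * (p + 1) = 2 * p + 2 from by ring] at this
    have h3 : (∫ ω, q (2 * p) ω ∂μ + ∫ ω, q (2 * p + 2) ω ∂μ) / 2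
        ≤ (σ ^ (2 * p) * (p ! : ℝ) * X + σ ^ (2 * p + 2) * ((p + 1)! : ℝ) * X) / 2 := by
      linarith [hm_even p, hm2]
    have h4 := mul_le_mul_of_nonneg_left h3 hc
    refine h4.trans ?_
    have h5 : (((2 * p + 1)! : ℝ))⁻¹ * |lam| ^ (2 * p + 1) *
          ((σ ^ (2 * p) * (p ! : ℝ) * X + σ ^ (2 * p + 2) * ((p + 1)! : ℝ) * X) / 2)
        = ((((2 * p + 1)! : ℝ))⁻¹ * |lam| ^ (2 * p + 1) *
          ((σ ^ (2 * p) * (p ! : ℝ) + σ ^ (2 * p + 2) * ((p + 1)! : ℝ)) / 2)) * X := by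
      ring
    rw [h5]
    have h6 := odd_coef (lam := lam) (le_of_lt hσ) p
    rw [← ht_def] at h6
    exact mul_le_mul_of_nonneg_right h6 hX0
  -- majorant and summability
  set C : ℝ := 1 + |lam| * (1 + σ ^ 2) with hC_def
  have hC0 : 0 ≤ |lam| * (1 + σ ^ 2) := by positivity
  have hC1 : 1 ≤ C := by rw [hC_def]; linarith
  have h2C : |lam| * (1 + σ ^ 2) ≤ C := by rw [hC_def]; linarith
  have base : Summable (fun k : ℕ => (t / 2) ^ (k / 2) / (((k / 2)! : ℝ))) := by
    refine Summable.even_add_odd ?_ ?_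
    · have hidx : ∀ k : ℕ, 2 * k / 2 = k := fun k => by omega
      simp only [hidx]
      exact Real.summable_pow_div_factorial (t / 2)
    · have hidx : ∀ k : ℕ, (2 * k + 1) / 2 = k := fun k => by omega
      simp only [hidx]
      exact Real.summable_pow_div_factorial (t / 2)
  have hMs : Summable (fun k : ℕ => C * ((t / 2) ^ (k / 2) / (((k / 2)! : ℝ))) * X) :=
    (base.mul_left C).mul_right X
  have hg_sum : Summable (fun k => ∫ ω, ‖f k ω‖ ∂μ) := by
    refine Summable.of_nonneg_of_le (fun k => integral_nonneg fun ω => norm_nonneg _)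
      (fun k => ?_) hMs
    have hB0 : (0:ℝ) ≤ (t / 2) ^ (k / 2) / (((k / 2)! : ℝ)) := by positivity
    rcases Nat.even_or_odd k with ⟨p, hp⟩ | ⟨p, hp⟩
    · have hk : k = 2 * p := by omega
      subst hk
      rw [show 2 * p / 2 = p from by omega] at hB0 ⊢
      refine (habs_even p).trans ?_
      calc (t / 2) ^ p / ((p ! : ℝ)) * X ≤ C * ((t / 2) ^ p / ((p ! : ℝ))) * X := by
            rw [show (t / 2) ^ p / ((p ! : ℝ)) = (t / 2) ^ p / ((p ! : ℝ)) from rfl]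
            have := mul_le_mul_of_nonneg_right
              (le_mul_of_one_le_left hB0 hC1) hX0
            simpa [mul_assoc] using this
        _ = _ := rfl
    · have hk : k = 2 * p + 1 := by omega
      subst hk
      rw [show (2 * p + 1) / 2 = p from by omega] at hB0 ⊢
      refine (habs_odd p).trans ?_
      exact mul_le_mul_of_nonneg_right (mul_le_mul_of_nonneg_right h2C hB0) hX0
  have hq_exp : ∀ ω, x ⬝ᵥ (mexp (lam • W ω)) *ᵥ x = ∑' k, f k ω := by
    intro ω
    rw [show mexp (lam • W ω) = NormedSpace.exp (lam • W ω) from rfl, exp_qf]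
    refine tsum_congr fun k => ?_
    simp only [hf_def, hq_def]
    rw [smul_pow, smul_mulVec, dotProduct_smul, smul_eq_mul, ← mul_assoc]
  have hswap := integral_tsum_of_summable_integral_norm hf_int hg_sum
  have hIeq : ∫ ω, x ⬝ᵥ (mexp (lam • W ω)) *ᵥ x ∂μ = ∑' k, ∫ ω, f k ω ∂μ := by
    rw [integral_congr_ae (Filter.Eventually.of_forall hq_exp), ← hswap]
  rw [hIeq]
  have hsumInt : Summable (fun k => ∫ ω, f k ω ∂μ) :=
    Summable.of_norm_bounded hg_sum (fun k => norm_integral_le_integral_norm _)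
  have he : Summable (fun p => ∫ ω, f (2 * p) ω ∂μ) :=
    hsumInt.comp_injective (fun a b h => by omega)
  have ho : Summable (fun p => ∫ ω, f (2 * p + 1) ω ∂μ) :=
    hsumInt.comp_injective (fun a b h => by omega)
  rw [← tsum_even_add_odd he ho]
  have hodd0 : ∀ p : ℕ, ∫ ω, f (2 * p + 1) ω ∂μ = 0 := by
    intro p
    have h1 : ∫ ω, f (2 * p + 1) ω ∂μ
        = (((2 * p + 1)! : ℝ))⁻¹ * lam ^ (2 * p + 1) * ∫ ω, q (2 * p + 1) ω ∂μ := by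
      simp only [hf_def]
      exact integral_const_mul _ _
    rw [h1, hm_odd p, mul_zero]
  rw [tsum_congr hodd0, tsum_zero, add_zero]
  have hrhs_sum : Summable (fun p : ℕ => (t / 2) ^ p / ((p ! : ℝ)) * X) :=
    (Real.summable_pow_div_factorial (t / 2)).mul_right X
  refine (Summable.tsum_le_tsum hterm he hrhs_sum).trans ?_
  rw [tsum_mul_right]
  have hexp : ∑' p : ℕ, (t / 2) ^ p / ((p ! : ℝ)) = Real.exp (t / 2) := by
    rw [Real.exp_eq_exp_ℝ, NormedSpace.exp_eq_tsum_div]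
  rw [hexp]

end Key
/-- matrix moment generating function bound.  If a random symmetric
matrix has vanishing odd moments and even moments `E W̄^{2p} ⪯ σ^{2p} p! I`, then for
`|λ|σ < 1`, `E exp(λW̄) ⪯ exp(λ²σ²/2 · (1−λ²σ²)⁻¹) I`, and in particular for
`|λ|σ ≤ 1/√2`, `E exp(λW̄) ⪯ exp(λ²σ²) I`. -/

theorem matrix_mgf_bound {N : ℕ} {Ω : Type*} [MeasurableSpace Ω]
    (μ : Measure Ω) [IsProbabilityMeasure μ]
    (W : Ω → Matrix (Fin N) (Fin N) ℝ) (σ : ℝ) (hσ : 0 < σ)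
    (hsymm : ∀ ω, (W ω).IsSymm)
    (hint : ∀ (k : ℕ) (i j : Fin N), Integrable (fun ω => ((W ω) ^ k) i j) μ)
    (hodd : ∀ (p : ℕ) (i j : Fin N), ∫ ω, ((W ω) ^ (2 * p + 1)) i j ∂μ = 0)
    (heven : ∀ p : ℕ, 1 ≤ p →
      ((σ ^ (2 * p) * (Nat.factorial p : ℝ)) • (1 : Matrix (Fin N) (Fin N) ℝ) -
        Matrix.of fun i j => ∫ ω, ((W ω) ^ (2 * p)) i j ∂μ).PosSemidef) :
    ∀ lam : ℝ, (∀ i j : Fin N, Integrable (fun ω => mexp (lam • W ω) i j) μ) →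
      (|lam| * σ < 1 →
        ((Real.exp (lam ^ 2 * σ ^ 2 / 2 * (1 - lam ^ 2 * σ ^ 2)⁻¹)) •
            (1 : Matrix (Fin N) (Fin N) ℝ) -
          Matrix.of fun i j => ∫ ω, mexp (lam • W ω) i j ∂μ).PosSemidef) ∧
      (|lam| * σ ≤ 1 / Real.sqrt 2 →
        ((Real.exp (lam ^ 2 * σ ^ 2)) • (1 : Matrix (Fin N) (Fin N) ℝ) -
          Matrix.of fun i j => ∫ ω, mexp (lam • W ω) i j ∂μ).PosSemidef) := by
  intro lam hintexp
  have hM_le : ∀ x : Fin N → ℝ,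
      x ⬝ᵥ (Matrix.of fun i j => ∫ ω, mexp (lam • W ω) i j ∂μ) *ᵥ x
        ≤ Real.exp (lam ^ 2 * σ ^ 2 / 2) * (x ⬝ᵥ x) := by
    intro x
    rw [← integral_qf _ hintexp x]
    exact key_bound μ W σ hσ hsymm hint hodd heven lam x
  have hX0 : ∀ x : Fin N → ℝ, 0 ≤ x ⬝ᵥ x := fun x =>
    Finset.sum_nonneg fun i _ => mul_self_nonneg _
  have hsym_exp : ∀ ω, (mexp (lam • W ω)).IsSymm := by
    intro ω
    have h : (lam • W ω)ᵀ = lam • W ω := by rw [transpose_smul, (hsymm ω).eq]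
    show (mexp (lam • W ω))ᵀ = _
    rw [show mexp (lam • W ω) = NormedSpace.exp (lam • W ω) from rfl,
      ← Matrix.exp_transpose, h]
  have hMherm : (Matrix.of fun i j => ∫ ω, mexp (lam • W ω) i j ∂μ).IsHermitian := by
    rw [Matrix.IsHermitian]
    ext i j
    simp only [conjTranspose_apply, Matrix.of_apply, star_trivial]
    refine integral_congr_ae (Filter.Eventually.of_forall fun ω => ?_)
    calc mexp (lam • W ω) j i = (mexp (lam • W ω))ᵀ i j := (Matrix.transpose_apply _ _ _).symm
      _ = mexp (lam • W ω) i j := by rw [(hsym_exp ω).eq]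
  have build : ∀ c : ℝ, Real.exp (lam ^ 2 * σ ^ 2 / 2) ≤ c →
      ((c • (1 : Matrix (Fin N) (Fin N) ℝ) -
        Matrix.of fun i j => ∫ ω, mexp (lam • W ω) i j ∂μ).PosSemidef) := by
    intro c hc
    refine Matrix.PosSemidef.of_dotProduct_mulVec_nonneg ?_ ?_
    · refine Matrix.IsHermitian.sub ?_ hMherm
      rw [Matrix.IsHermitian, conjTranspose_smul, conjTranspose_one, star_trivial]
    · intro y
      have hy := hM_le y
      have h2 : Real.exp (lam ^ 2 * σ ^ 2 / 2) * (y ⬝ᵥ y) ≤ c * (y ⬝ᵥ y) :=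
        mul_le_mul_of_nonneg_right hc (hX0 y)
      simp only [Matrix.sub_mulVec, Matrix.smul_mulVec, Matrix.one_mulVec,
        dotProduct_sub, dotProduct_smul, smul_eq_mul, star_trivial]
      linarith [hy, h2]
  constructor
  · intro hlt
    have ht1 : lam ^ 2 * σ ^ 2 < 1 := by
      have h0 : 0 ≤ |lam| * σ := by positivity
      have heq : lam ^ 2 * σ ^ 2 = (|lam| * σ) ^ 2 := by rw [mul_pow, sq_abs]
      rw [heq]
      nlinarith [h0, hlt]
    refine build _ (Real.exp_le_exp.mpr ?_)
    have hs0 : 0 ≤ lam ^ 2 * σ ^ 2 := by positivity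
    have h1s : 0 < 1 - lam ^ 2 * σ ^ 2 := by linarith
    have hi : (1 - lam ^ 2 * σ ^ 2) * (1 - lam ^ 2 * σ ^ 2)⁻¹ = 1 :=
      mul_inv_cancel₀ (ne_of_gt h1s)
    have hiv : 0 < (1 - lam ^ 2 * σ ^ 2)⁻¹ := inv_pos.mpr h1s
    nlinarith [hi, hiv.le, hs0, mul_nonneg (mul_nonneg hs0 hs0) hiv.le]
  · intro _
    refine build _ (Real.exp_le_exp.mpr ?_)
    have hs0 : 0 ≤ lam ^ 2 * σ ^ 2 := by positivity
    linarith
end
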